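/- arXiv:1502.05389 — 2 statements merged into one kernel-verified Lean document; each statement's English description precedes it below -/
import Mathlib

section
/- Let A, B be endomorphisms of a finite-dimensional complex vector space V such that every x in the subspace M satisfies B(A^k x) = 0 for all k ≥ 0. Then every vector in M is a 'B-free' state: exp(t(A+B)) x = exp(tA) x for all t ∈ ℝ. (Sufficiency direction of Theorem 1.) -/
open NormedSpace

theorem ContinuousLinearMap.add_pow_apply_eq_pow_apply {R V : Type*} [Semiring R]
    [TopologicalSpace V] [AddCommMonoid V] [Module R V] [ContinuousAdd V]
    {A B : V →L[R] V} {x : V} (h : ∀ k : ℕ, B ((A ^ k) x) = 0) (n : ℕ) :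
    ((A + B) ^ n) x = (A ^ n) x := by
  induction n with
  | zero => rfl
  | succ n ih =>
    rw [pow_succ', pow_succ', mul_apply_eq_comp, ih, add_apply, h n, add_zero, mul_apply_eq_comp]

theorem ContinuousLinearMap.exp_apply_eq_tsum {𝕂 V : Type*} [RCLike 𝕂] [NormedAddCommGroup V]
    [NormedSpace 𝕂 V] [CompleteSpace V] (T : V →L[𝕂] V) (x : V) :
    exp T x = ∑' n : ℕ, (n.factorial⁻¹ : 𝕂) • (T ^ n) x := by
  rw [exp_eq_tsum 𝕂]
  exact (apply 𝕂 V x).map_tsum (expSeries_summable' T)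

theorem ContinuousLinearMap.exp_apply_eq_of_forall_pow_apply_eq {𝕂 V : Type*} [RCLike 𝕂]
    [NormedAddCommGroup V] [NormedSpace 𝕂 V] [CompleteSpace V] {S T : V →L[𝕂] V} {x : V}
    (h : ∀ n : ℕ, (S ^ n) x = (T ^ n) x) : exp S x = exp T x := by
  simp only [exp_apply_eq_tsum (𝕂 := 𝕂), h]

/-- If every `x` in the subspace `M` satisfies `B A^k x = 0` for all `k ≥ 0`, then every
vector of `M` is `B`-free: `exp(t(A+B)) x = exp(tA) x` for all real `t`. -/
theorem stmt8 {V : Type*} [NormedAddCommGroup V] [NormedSpace ℂ V]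
    [FiniteDimensional ℂ V] (A B : V →L[ℂ] V) (M : Submodule ℂ V)
    (hM : ∀ x ∈ M, ∀ k : ℕ, B ((A ^ k) x) = 0) :
    ∀ x ∈ M, ∀ t : ℝ, exp ((t : ℂ) • (A + B)) x = exp ((t : ℂ) • A) x := by
  intro x hx t
  refine ContinuousLinearMap.exp_apply_eq_of_forall_pow_apply_eq (𝕂 := ℂ) fun n => ?_
  rw [smul_pow, smul_pow, smul_apply, smul_apply,
    ContinuousLinearMap.add_pow_apply_eq_pow_apply (hM x hx)]
end

section
/- Let H₀ and H_I be Hermitian operators on a finite-dimensional complex Hilbert space H of dimension n, and α ∈ ℝ. Set H_I^{(α)} = H_I − α·I. A unit vector ψ satisfies exp(−it(H₀+H_I)) ψ = exp(−iαt) exp(−itH₀) ψ for all t ∈ ℝ if and only if ψ ∈ Ker(H_I^{(α)}) ∩ Ker(H_I^{(α)} H₀) ∩ ... ∩ Ker(H_I^{(α)} H₀^{n−1}). -/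
/-!
Put `A = H₀ + α` and `D = H_I - α`, so that `H₀ + H_I = A + D` and the right-hand side is
`exp(-itA) ψ`. Two curves `t ↦ exp(-itM) ψ` and `t ↦ exp(-itN) ψ` agree iff all their Taylor
coefficients `M^k ψ`, `N^k ψ` agree, and `(A + D)^k ψ = A^k ψ` for all `k` iff `D` kills every
`A^k ψ`. The span of the `A^k ψ` is the same as that of the `H₀^k ψ` (they differ by a scalar
shift), and by Cayley–Hamilton it is already spanned by the `H₀^k ψ` with `k < n`.
-/

open NormedSpace Polynomial Module

namespace Module.End

variable {R M : Type*} [CommRing R] [AddCommGroup M] [Module R M]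

theorem aeval_apply_mem_of_forall_pow_apply_mem {f : Module.End R M} {v : M} {p : Submodule R M}
    {q : R[X]} (h : ∀ k ∈ q.support, (f ^ k) v ∈ p) : aeval f q v ∈ p := by
  rw [aeval_def, eval₂_eq_sum, Polynomial.sum_def, LinearMap.sum_apply]
  exact p.sum_mem fun k hk => by
    rw [← Algebra.smul_def, LinearMap.smul_apply]
    exact p.smul_mem _ (h k hk)

theorem add_algebraMap_pow_apply_mem {f : Module.End R M} {v : M} {p : Submodule R M}
    (h : ∀ k : ℕ, (f ^ k) v ∈ p) (c : R) (k : ℕ) : ((f + algebraMap R _ c) ^ k) v ∈ p := by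
  have : (f + algebraMap R _ c) ^ k = aeval f ((X + C c) ^ k) := by simp
  exact this ▸ aeval_apply_mem_of_forall_pow_apply_mem fun j _ => h j

theorem add_algebraMap_pow_apply_mem_iff {f : Module.End R M} {v : M} {p : Submodule R M}
    (c : R) : (∀ k : ℕ, ((f + algebraMap R _ c) ^ k) v ∈ p) ↔ ∀ k : ℕ, (f ^ k) v ∈ p :=
  ⟨fun h k => by simpa using add_algebraMap_pow_apply_mem h (-c) k,
    fun h => add_algebraMap_pow_apply_mem h c⟩

theorem pow_apply_mem_of_forall_lt_finrank [StrongRankCondition R] [Module.Free R M]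
    [Module.Finite R M] (f : Module.End R M) {v : M} {p : Submodule R M}
    (h : ∀ k < finrank R M, (f ^ k) v ∈ p) (m : ℕ) : (f ^ m) v ∈ p := by
  have := nontrivial_of_invariantBasisNumber R
  -- Cayley–Hamilton: `X ^ m` may be reduced modulo the characteristic polynomial.
  have hred : (f ^ m) v = aeval f (X ^ m %ₘ f.charpoly) v := by
    rw [aeval_modByMonic_eq_self_of_root f.aeval_self_charpoly, aeval_X_pow]
  rw [hred]
  refine aeval_apply_mem_of_forall_pow_apply_mem fun k hk => h k ?_
  have hdeg : (k : WithBot ℕ) < finrank R M := calc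
    (k : WithBot ℕ) ≤ (X ^ m %ₘ f.charpoly).degree := le_degree_of_mem_supp k hk
    _ < f.charpoly.degree := degree_modByMonic_lt _ f.charpoly_monic
    _ ≤ f.charpoly.natDegree := degree_le_natDegree
    _ = finrank R M := by rw [f.charpoly_natDegree]
  exact_mod_cast hdeg

theorem add_pow_apply_eq_pow_apply_iff {f g : Module.End R M} {v : M} :
    (∀ k : ℕ, ((f + g) ^ k) v = (f ^ k) v) ↔ ∀ k : ℕ, g ((f ^ k) v) = 0 := by
  have hstep : ∀ k, (f + g) ((f ^ k) v) = (f ^ (k + 1)) v + g ((f ^ k) v) := fun k => by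
    rw [LinearMap.add_apply, pow_succ', Module.End.mul_apply]
  constructor
  · intro h k
    calc g ((f ^ k) v) = ((f + g) ^ (k + 1)) v - (f ^ (k + 1)) v := by
          rw [pow_succ', Module.End.mul_apply, h k, hstep, add_sub_cancel_left]
      _ = 0 := by rw [h, sub_self]
  · intro h k
    induction k with
    | zero => rfl
    | succ k ih => rw [pow_succ', Module.End.mul_apply, ih, hstep, h, add_zero]

end Module.End

section Exp
variable {𝕜 E : Type*} [RCLike 𝕜] [NormedAddCommGroup E] [NormedSpace 𝕜 E] [CompleteSpace E]

theorem hasSum_exp_apply (M : E →L[𝕜] E) (x : E) :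
    HasSum (fun n : ℕ => (n.factorial⁻¹ : 𝕜) • (M ^ n) x) (exp M x) :=
  (exp_series_hasSum_exp' (𝕂 := 𝕜) M).mapL (ContinuousLinearMap.apply 𝕜 E x)

theorem exp_apply_eq_of_pow_apply_eq {M N : E →L[𝕜] E} {x : E}
    (h : ∀ k : ℕ, (M ^ k) x = (N ^ k) x) : exp M x = exp N x :=
  (hasSum_exp_apply M x).unique (by simpa only [h] using hasSum_exp_apply N x)

end Exp

theorem exp_add_algebraMap {𝕂 𝔸 : Type*} [RCLike 𝕂] [NormedRing 𝔸] [NormedAlgebra 𝕂 𝔸]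
    [CompleteSpace 𝔸] (x : 𝔸) (c : 𝕂) : exp (x + algebraMap 𝕂 𝔸 c) = exp c • exp x := by
  rw [exp_add_of_commute_of_mem_ball (𝕂 := 𝕂) (Algebra.commutes c x).symm
    ((expSeries_radius_eq_top 𝕂 𝔸).symm ▸ edist_lt_top _ _)
    ((expSeries_radius_eq_top 𝕂 𝔸).symm ▸ edist_lt_top _ _),
    ← algebraMap_exp_comm, Algebra.smul_def, Algebra.commutes]

section ComplexExp
variable {E : Type*} [NormedAddCommGroup E] [NormedSpace ℂ E] [CompleteSpace E]

theorem hasDerivAt_exp_smul_apply (M : E →L[ℂ] E) (x : E) (t : ℝ) :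
    HasDerivAt (fun u : ℝ => exp (u • M) x) (exp (t • M) (M x)) t :=
  ((ContinuousLinearMap.apply ℂ E x).restrictScalars ℝ).hasFDerivAt.comp_hasDerivAt t
    (hasDerivAt_exp_smul_const M t)

theorem pow_apply_eq_of_exp_smul_apply_eq {M N : E →L[ℂ] E} {x : E}
    (h : ∀ t : ℝ, exp (t • M) x = exp (t • N) x) (k : ℕ) : (M ^ k) x = (N ^ k) x := by
  suffices h' : ∀ t : ℝ, exp (t • M) ((M ^ k) x) = exp (t • N) ((N ^ k) x) by
    simpa using h' 0
  induction k with
  | zero => simpa using h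
  | succ k ih =>
    intro t
    rw [pow_succ', pow_succ', mul_apply_eq_comp, mul_apply_eq_comp]
    exact (hasDerivAt_exp_smul_apply M _ t).unique (funext ih ▸ hasDerivAt_exp_smul_apply N _ t)

theorem exp_smul_apply_eq_iff {M N : E →L[ℂ] E} {x : E} {c : ℂ} (hc : c ≠ 0) :
    (∀ t : ℝ, exp ((c * t) • M) x = exp ((c * t) • N) x) ↔ ∀ k : ℕ, (M ^ k) x = (N ^ k) x := by
  have hpow : ∀ (T : E →L[ℂ] E) (a : ℂ) (k : ℕ), ((a • T) ^ k) x = a ^ k • (T ^ k) x :=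
    fun T a k => by rw [_root_.smul_pow, smul_apply]
  constructor
  · intro h k
    have hc' : ∀ t : ℝ, exp (t • c • M) x = exp (t • c • N) x := fun t => by
      rw [RCLike.real_smul_eq_coe_smul (K := ℂ), RCLike.real_smul_eq_coe_smul (K := ℂ), smul_smul,
        smul_smul, mul_comm]
      exact h t
    have := pow_apply_eq_of_exp_smul_apply_eq hc' k
    rw [hpow, hpow] at this
    exact smul_right_injective E (pow_ne_zero k hc) this
  · intro h t
    exact exp_apply_eq_of_pow_apply_eq fun k => by rw [hpow, hpow, h k]

end ComplexExp

theorem stmt9_general {H : Type*} [NormedAddCommGroup H] [InnerProductSpace ℂ H]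
    [FiniteDimensional ℂ H] (n : ℕ) (hn : n = Module.finrank ℂ H)
    (H0 HI : H →L[ℂ] H)
    (α : ℝ) (ψ : H) :
    (∀ t : ℝ,
        exp ((-Complex.I * t) • (H0 + HI)) ψ
          = Complex.exp (-Complex.I * α * t) • exp ((-Complex.I * t) • H0) ψ) ↔
      ∀ k < n, (HI - (α : ℂ) • 1) ((H0 ^ k) ψ) = 0 := by
  set A := H0 + algebraMap ℂ (H →L[ℂ] H) α
  set D := HI - (α : ℂ) • 1
  have hB : H0 + HI = A + D := by
    simp only [A, D, Algebra.algebraMap_eq_smul_one]; abel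
  have hA : ∀ t : ℝ, exp ((-Complex.I * t) • A) ψ
      = Complex.exp (-Complex.I * α * t) • exp ((-Complex.I * t) • H0) ψ := fun t => by
    rw [smul_add, Algebra.algebraMap_eq_smul_one, smul_smul, ← Algebra.algebraMap_eq_smul_one,
      exp_add_algebraMap, smul_apply, Complex.exp_eq_exp_ℂ, mul_right_comm]
  simp_rw [← hA, hB, exp_smul_apply_eq_iff (neg_ne_zero.2 Complex.I_ne_zero)]
  calc (∀ k : ℕ, ((A + D) ^ k) ψ = (A ^ k) ψ)
      ↔ ∀ k : ℕ, (A ^ k) ψ ∈ LinearMap.ker (D : H →ₗ[ℂ] H) := by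
        simp only [← ContinuousLinearMap.coe_coe]
        push_cast
        exact Module.End.add_pow_apply_eq_pow_apply_iff
    _ ↔ ∀ k : ℕ, (H0 ^ k) ψ ∈ LinearMap.ker (D : H →ₗ[ℂ] H) := by
        simp only [A, ← ContinuousLinearMap.coe_coe]
        push_cast
        exact Module.End.add_algebraMap_pow_apply_mem_iff _
    _ ↔ ∀ k < n, D ((H0 ^ k) ψ) = 0 := by
        subst hn
        simp only [← ContinuousLinearMap.coe_coe, ← LinearMap.mem_ker]
        push_cast
        exact ⟨fun h k _ => h k, Module.End.pow_apply_mem_of_forall_lt_finrank (H0 : H →ₗ[ℂ] H)⟩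

/-- A unit vector `ψ` satisfies `exp(-it(H₀+H_I)) ψ = exp(-iαt) exp(-itH₀) ψ` for all real
`t` iff `ψ ∈ Ker H_I^(α) ∩ Ker (H_I^(α) H₀) ∩ ... ∩ Ker (H_I^(α) H₀^(n-1))`,
where `H_I^(α) = H_I - α·I`. -/
theorem stmt9 {H : Type*} [NormedAddCommGroup H] [InnerProductSpace ℂ H]
    [FiniteDimensional ℂ H] (n : ℕ) (hn : n = Module.finrank ℂ H)
    (H0 HI : H →L[ℂ] H) (h0 : IsSelfAdjoint H0) (hI : IsSelfAdjoint HI)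
    (α : ℝ) (ψ : H) (hψ : ‖ψ‖ = 1) :
    (∀ t : ℝ,
        exp ((-Complex.I * t) • (H0 + HI)) ψ
          = Complex.exp (-Complex.I * α * t) • exp ((-Complex.I * t) • H0) ψ) ↔
      ∀ k < n, (HI - (α : ℂ) • 1) ((H0 ^ k) ψ) = 0 :=
  stmt9_general n hn H0 HI α ψ
end
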